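/- arXiv:1306.5371 — 3 statements merged into one kernel-verified Lean document; each statement's English description precedes it below -/
import Mathlib

section
/- For any positive integers m, n, y, z with gcd(n,y)=1, and integers K ≥ L ≥ 0, every coefficient in the power series expansion of 1/((q^z;q^m)_K (q^{nyz};q^{nm})_L) − 1/((q^{yz};q^m)_L (q^{nz};q^{nm})_K) is nonnegative. -/
open Finset PowerSeries

/-- `(q^c; q^m)_L = ∏_{j=0}^{L-1} (1 - q^{c+jm})` as a formal power series over `ℚ`. -/
noncomputable def qp (c m L : ℕ) : PowerSeries ℚ :=
  ∏ j ∈ Finset.range L, (1 - (PowerSeries.X : PowerSeries ℚ) ^ (c + j * m))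

/-!
Write `1/(1-q^u) = (1 + q^u + ⋯ + q^{(n-1)u}) / (1-q^{nu})`, with `F_n(u)` for the numerator.
Since `1/(1-q^{nu}) ≼ 1/(1-q^u)` coefficientwise, the factors with `j ≥ L` can be dropped, and
after cancelling the common nonnegative factor `∏ 1/(1-q^{n(·)})` it remains to show
`F_n(yz) ∏_{0<j<L} F_n(yz+jm) / (1-q^{nz}) ≼ ∏_{0<j<L} F_n(z+jm) / (1-q^z)`.
Without the products this holds because, `n` and `y` being coprime, the exponents `(kn + ρy)z`
are distinct multiples of `z`. Each further factor is matched by splitting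
`F_n(yz+jm) = ∑_ρ q^{ρ(y-1)z} q^{ρ(z+jm)}`: the bound is proved for every shift by `q^{kz}`,
which absorbs `q^{ρ(y-1)z}`.
-/

section Order

variable {R : Type*} [CommSemiring R] [PartialOrder R]

def CoeffNonneg (f : R⟦X⟧) : Prop := ∀ i, 0 ≤ coeff i f

def CoeffLE (f g : R⟦X⟧) : Prop := ∀ i, coeff i f ≤ coeff i g

theorem CoeffLE.refl (f : R⟦X⟧) : CoeffLE f f := fun _ => le_rfl

theorem CoeffLE.mul_X_pow {f g : R⟦X⟧} (h : CoeffLE f g) (k : ℕ) :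
    CoeffLE (f * X ^ k) (g * X ^ k) := fun i => by
  rw [coeff_mul_X_pow', coeff_mul_X_pow']
  split_ifs
  exacts [h _, le_rfl]

variable [IsOrderedRing R]

theorem CoeffNonneg.one : CoeffNonneg (1 : R⟦X⟧) := fun i => by
  rw [coeff_one]; split_ifs <;> simp

theorem CoeffNonneg.X_pow (k : ℕ) : CoeffNonneg (X ^ k : R⟦X⟧) := fun i => by
  rw [coeff_X_pow]; split_ifs <;> simp

theorem CoeffNonneg.mul {f g : R⟦X⟧} (hf : CoeffNonneg f) (hg : CoeffNonneg g) :
    CoeffNonneg (f * g) := fun i => by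
  rw [coeff_mul]
  exact sum_nonneg fun p _ => mul_nonneg (hf _) (hg _)

theorem CoeffNonneg.prod {ι : Type*} {s : Finset ι} {f : ι → R⟦X⟧}
    (h : ∀ i ∈ s, CoeffNonneg (f i)) : CoeffNonneg (∏ i ∈ s, f i) :=
  prod_induction f CoeffNonneg (fun _ _ => .mul) .one h

theorem CoeffNonneg.sum {ι : Type*} {s : Finset ι} {f : ι → R⟦X⟧}
    (h : ∀ i ∈ s, CoeffNonneg (f i)) : CoeffNonneg (∑ i ∈ s, f i) := fun k => by
  rw [map_sum]
  exact sum_nonneg fun i hi => h i hi k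

theorem CoeffLE.mul {f g f' g' : R⟦X⟧} (h : CoeffLE f g) (h' : CoeffLE f' g')
    (hf' : CoeffNonneg f') (hg : CoeffNonneg g) : CoeffLE (f * f') (g * g') := fun i => by
  rw [coeff_mul, coeff_mul]
  exact sum_le_sum fun p _ => mul_le_mul (h p.1) (h' p.2) (hf' p.2) (hg p.1)

theorem CoeffLE.prod {ι : Type*} {s : Finset ι} {f g : ι → R⟦X⟧}
    (hf : ∀ i ∈ s, CoeffNonneg (f i)) (hg : ∀ i ∈ s, CoeffNonneg (g i))
    (h : ∀ i ∈ s, CoeffLE (f i) (g i)) : CoeffLE (∏ i ∈ s, f i) (∏ i ∈ s, g i) := by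
  classical
  induction s using Finset.induction_on with
  | empty => exact .refl _
  | insert a s ha ih =>
    simp only [mem_insert, forall_eq_or_imp] at hf hg h
    rw [prod_insert ha, prod_insert ha]
    exact h.1.mul (ih hf.2 hg.2 h.2) (.prod hf.2) hg.1

theorem CoeffLE.sum {ι : Type*} {s : Finset ι} {f g : ι → R⟦X⟧}
    (h : ∀ i ∈ s, CoeffLE (f i) (g i)) : CoeffLE (∑ i ∈ s, f i) (∑ i ∈ s, g i) :=
  fun k => by
  rw [map_sum, map_sum]
  exact sum_le_sum fun i hi => h i hi k

end Order

section Geom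

variable {R : Type*}

def geomSeries [Semiring R] (a : ℕ) : R⟦X⟧ := mk fun i => if a ∣ i then 1 else 0

noncomputable def geomPoly [Semiring R] (n a : ℕ) : R⟦X⟧ := ∑ ρ ∈ range n, X ^ (ρ * a)

theorem coeff_geomSeries [Semiring R] (a i : ℕ) :
    coeff i (geomSeries a : R⟦X⟧) = if a ∣ i then 1 else 0 :=
  coeff_mk _ _

theorem one_sub_X_pow_mul_geomSeries [CommRing R] {a : ℕ} (ha : 0 < a) :
    (1 - X ^ a) * geomSeries a = (1 : R⟦X⟧) := by
  ext i
  rw [sub_mul, one_mul, map_sub, mul_comm (X ^ a), coeff_mul_X_pow', coeff_one, coeff_geomSeries]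
  rcases lt_or_ge i a with hia | hai
  · rcases Nat.eq_zero_or_pos i with rfl | hi
    · simp [ha.ne']
    · simp [hia.not_ge, hi.ne', Nat.not_dvd_of_pos_of_lt hi hia]
  · simp [hai, coeff_geomSeries, Nat.dvd_sub_iff_left hai dvd_rfl, (ha.trans_le hai).ne']

theorem geomPoly_mul_one_sub_X_pow [CommRing R] (n a : ℕ) :
    geomPoly n a * (1 - X ^ a) = (1 - X ^ (n * a) : R⟦X⟧) := by
  simp only [geomPoly, pow_mul']
  exact geom_sum_mul_neg _ n

theorem geomSeries_eq_geomPoly_mul [CommRing R] {n a : ℕ} (hn : 0 < n) (ha : 0 < a) :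
    (geomSeries a : R⟦X⟧) = geomPoly n a * geomSeries (n * a) :=
  calc (geomSeries a : R⟦X⟧)
      = geomSeries a * ((1 - X ^ (n * a)) * geomSeries (n * a)) := by
        rw [one_sub_X_pow_mul_geomSeries (by positivity), mul_one]
    _ = geomPoly n a * geomSeries (n * a) * ((1 - X ^ a) * geomSeries a) := by
        rw [← geomPoly_mul_one_sub_X_pow]; ring
    _ = geomPoly n a * geomSeries (n * a) := by
        rw [one_sub_X_pow_mul_geomSeries ha, mul_one]

theorem coeff_geomSeries_mul_geomPoly [CommSemiring R] (N n u w : ℕ) :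
    coeff w (geomSeries N * geomPoly n u : R⟦X⟧)
      = #{ρ ∈ range n | ρ * u ≤ w ∧ N ∣ w - ρ * u} := by
  rw [geomPoly, mul_sum, map_sum, ← sum_boole]
  refine sum_congr rfl fun ρ _ => ?_
  rw [coeff_mul_X_pow', coeff_geomSeries, ite_and]

variable [CommSemiring R] [PartialOrder R] [IsOrderedRing R]

theorem CoeffNonneg.geomSeries (a : ℕ) : CoeffNonneg (geomSeries a : R⟦X⟧) := fun i => by
  rw [coeff_geomSeries]; split_ifs <;> simp

theorem CoeffNonneg.geomPoly (n a : ℕ) : CoeffNonneg (geomPoly n a : R⟦X⟧) :=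
  .sum fun _ _ => .X_pow _

theorem coeffLE_geomSeries_of_dvd {a b : ℕ} (h : a ∣ b) :
    CoeffLE (geomSeries b : R⟦X⟧) (geomSeries a) := fun i => by
  rw [coeff_geomSeries, coeff_geomSeries]
  split_ifs with hb ha
  · exact le_rfl
  · exact absurd (h.trans hb) ha
  all_goals simp

theorem eq_of_mul_modEq_mul_of_coprime {n y z a b : ℕ} (hco : n.Coprime y) (hz : 0 < z)
    (ha : a < n) (hb : b < n) (h : a * (y * z) ≡ b * (y * z) [MOD n * z]) : a = b := by
  rw [← mul_assoc, ← mul_assoc] at h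
  exact ((Nat.ModEq.mul_right_cancel' hz.ne' h).cancel_right_of_coprime hco).eq_of_lt_of_lt ha hb

/-- By coprimality the exponents `(kn + ρy)z` with `k ≥ 0`, `ρ < n` are pairwise distinct. -/
theorem coeffLE_geomSeries_mul_geomPoly_mul_X_pow {n y z e : ℕ} (hz : 0 < z)
    (hco : n.Coprime y) (he : z ∣ e) :
    CoeffLE (geomSeries (n * z) * geomPoly n (y * z) * X ^ e : R⟦X⟧) (geomSeries z) := by
  intro i
  rw [coeff_mul_X_pow', coeff_geomSeries]
  split_ifs with hei hzi
  · rw [coeff_geomSeries_mul_geomPoly, ← Nat.cast_one]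
    refine Nat.mono_cast (card_le_one.mpr fun a ha b hb => ?_)
    simp only [mem_filter, mem_range] at ha hb
    exact eq_of_mul_modEq_mul_of_coprime hco hz ha.1 hb.1
      (((Nat.modEq_iff_dvd' ha.2.1).mpr ha.2.2).trans ((Nat.modEq_iff_dvd' hb.2.1).mpr hb.2.2).symm)
  · rw [coeff_geomSeries_mul_geomPoly, card_eq_zero.mpr, Nat.cast_zero]
    refine filter_eq_empty_iff.mpr fun ρ _ ⟨hle, hdvd⟩ => hzi ?_
    have hi : i = (i - e - ρ * (y * z)) + ρ * (y * z) + e := by omega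
    rw [hi]
    exact (((dvd_mul_left z n).trans hdvd).add ((dvd_mul_left z y).mul_left ρ)).add he
  all_goals simp

theorem CoeffLE.mul_geomPoly_mul_X_pow {A B : R⟦X⟧} {z a : ℕ}
    (h : ∀ e, z ∣ e → CoeffLE (A * X ^ e) B) (ha : z ∣ a) (n c : ℕ) {e : ℕ}
    (he : z ∣ e) :
    CoeffLE (A * geomPoly n (a + c) * X ^ e) (B * geomPoly n c) := by
  have hA : A * geomPoly n (a + c) * X ^ e
      = ∑ ρ ∈ range n, A * X ^ (e + ρ * a) * X ^ (ρ * c) := by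
    rw [geomPoly, mul_sum, sum_mul]
    exact sum_congr rfl fun ρ _ => by ring
  rw [hA, geomPoly, mul_sum]
  exact .sum fun ρ _ => (h _ (he.add (ha.mul_left ρ))).mul_X_pow _

theorem CoeffLE.mul_prod_geomPoly_mul_X_pow {ι : Type*} {A B : R⟦X⟧} {z : ℕ}
    (h : ∀ e, z ∣ e → CoeffLE (A * X ^ e) B) (n : ℕ) (s : Finset ι) (a c : ι → ℕ)
    (ha : ∀ i ∈ s, z ∣ a i) {e : ℕ} (he : z ∣ e) :
    CoeffLE (A * (∏ i ∈ s, geomPoly n (a i + c i)) * X ^ e)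
      (B * ∏ i ∈ s, geomPoly n (c i)) := by
  classical
  induction s using Finset.induction_on generalizing e with
  | empty => simpa using h e he
  | insert j s hj ih =>
    simp only [mem_insert, forall_eq_or_imp] at ha
    have key := CoeffLE.mul_geomPoly_mul_X_pow (fun e he => ih ha.2 he) ha.1 n (c j) he
    rw [prod_insert hj, prod_insert hj]
    convert key using 1 <;> ring

theorem coeffLE_geomSeries_mul_geomPoly_mul_prod {ι : Type*} {n y z : ℕ} (hy : 0 < y)
    (hz : 0 < z) (hco : n.Coprime y) (s : Finset ι) (c : ι → ℕ) :
    CoeffLE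
      (geomSeries (n * z) * geomPoly n (y * z) * ∏ i ∈ s, geomPoly n (y * z + c i) : R⟦X⟧)
      (geomSeries z * ∏ i ∈ s, geomPoly n (z + c i)) := by
  have hyz : ∀ i, (y - 1) * z + (z + c i) = y * z + c i := fun i => by
    obtain ⟨y, rfl⟩ := Nat.exists_eq_add_one_of_ne_zero hy.ne'
    simp only [Nat.add_sub_cancel]
    ring
  have key := CoeffLE.mul_prod_geomPoly_mul_X_pow (R := R)
    (fun e he => coeffLE_geomSeries_mul_geomPoly_mul_X_pow hz hco he) n s
    (fun _ => (y - 1) * z) (fun i => z + c i) (fun _ _ => dvd_mul_left z _) (dvd_zero z)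
  simpa only [hyz, pow_zero, mul_one] using key

end Geom

section Dual

variable {R : Type*} [CommRing R] [PartialOrder R] [IsOrderedRing R]

theorem coeffLE_prod_geomSeries_of_eq {n y z : ℕ} (hn : 0 < n) (hy : 0 < y) (hz : 0 < z)
    (hco : n.Coprime y) (c : ℕ → ℕ) (hc : c 0 = 0) (L : ℕ) :
    CoeffLE ((∏ j ∈ range L, geomSeries (y * z + c j))
        * ∏ j ∈ range L, geomSeries (n * (z + c j)) : R⟦X⟧)
      ((∏ j ∈ range L, geomSeries (z + c j))
        * ∏ j ∈ range L, geomSeries (n * (y * z + c j))) := by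
  cases L with
  | zero => exact .refl _
  | succ L =>
    have hyz : 0 < y * z := mul_pos hy hz
    have hv : ∀ j, (geomSeries (y * z + c j) : R⟦X⟧)
        = geomPoly n (y * z + c j) * geomSeries (n * (y * z + c j)) :=
      fun j => geomSeries_eq_geomPoly_mul hn (by omega)
    have hu : ∀ j, (geomSeries (z + c j) : R⟦X⟧)
        = geomPoly n (z + c j) * geomSeries (n * (z + c j)) :=
      fun j => geomSeries_eq_geomPoly_mul hn (by omega)
    set C : R⟦X⟧ := geomSeries (n * (y * z))
      * (∏ j ∈ range L, geomSeries (n * (y * z + c (j + 1))))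
      * ∏ j ∈ range L, geomSeries (n * (z + c (j + 1))) with hC_def
    have hC : CoeffNonneg C :=
      ((CoeffNonneg.geomSeries _).mul (.prod fun _ _ => .geomSeries _)).mul
        (.prod fun _ _ => .geomSeries _)
    have key := (coeffLE_geomSeries_mul_geomPoly_mul_prod hy hz hco (range L)
      (fun j => c (j + 1))).mul (.refl C) hC
      ((CoeffNonneg.geomSeries z).mul (.prod fun _ _ => .geomPoly _ _))
    convert key using 1
    · simp only [prod_range_succ', hc, add_zero, hv, prod_mul_distrib, hC_def]
      ring
    · simp only [prod_range_succ', hc, add_zero]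
      simp only [hu, prod_mul_distrib, hC_def]
      ring

theorem coeffLE_prod_geomSeries {n y z K L : ℕ} (hn : 0 < n) (hy : 0 < y) (hz : 0 < z)
    (hco : n.Coprime y) (c : ℕ → ℕ) (hc : c 0 = 0) (hLK : L ≤ K) :
    CoeffLE ((∏ j ∈ range L, geomSeries (y * z + c j))
        * ∏ j ∈ range K, geomSeries (n * (z + c j)) : R⟦X⟧)
      ((∏ j ∈ range K, geomSeries (z + c j))
        * ∏ j ∈ range L, geomSeries (n * (y * z + c j))) := by
  obtain ⟨d, rfl⟩ := Nat.exists_eq_add_of_le hLK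
  rw [prod_range_add, prod_range_add, ← mul_assoc, mul_right_comm _ _ (∏ j ∈ range L, _)]
  exact (coeffLE_prod_geomSeries_of_eq hn hy hz hco c hc L).mul
    (.prod (fun _ _ => .geomSeries _) (fun _ _ => .geomSeries _)
      fun _ _ => coeffLE_geomSeries_of_dvd (dvd_mul_left _ _))
    (.prod fun _ _ => .geomSeries _)
    ((CoeffNonneg.prod fun _ _ => .geomSeries _).mul (.prod fun _ _ => .geomSeries _))

end Dual

theorem qp_mul_prod_geomSeries {c : ℕ} (hc : 0 < c) (m L : ℕ) :
    qp c m L * ∏ j ∈ range L, geomSeries (c + j * m) = 1 := by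
  rw [qp, ← prod_mul_distrib]
  exact prod_eq_one fun j _ => one_sub_X_pow_mul_geomSeries (by omega)

theorem inv_qp {c : ℕ} (hc : 0 < c) (m L : ℕ) :
    (qp c m L)⁻¹ = ∏ j ∈ range L, geomSeries (c + j * m) := by
  have h := qp_mul_prod_geomSeries hc m L
  have h0 :
      constantCoeff (qp c m L) * constantCoeff (∏ j ∈ range L, geomSeries (c + j * m)) = 1 := by
    rw [← map_mul, h, map_one]
  exact (inv_eq_iff_mul_eq_one (left_ne_zero_of_mul_eq_one h0)).mpr (by rw [mul_comm, h])

theorem dual_thm_general (m n y z K L : ℕ) (hn : 0 < n) (hy : 0 < y) (hz : 0 < z)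
    (hco : Nat.Coprime n y) (hKL : L ≤ K) (x : ℕ) :
    0 ≤ PowerSeries.coeff x
      ((qp z m K * qp (n * y * z) (n * m) L)⁻¹
        - (qp (y * z) m L * qp (n * z) (n * m) K)⁻¹) := by
  have hyz : 0 < y * z := mul_pos hy hz
  have hv : ∀ j, n * y * z + j * (n * m) = n * (y * z + j * m) := fun j => by ring
  have hu : ∀ j, n * z + j * (n * m) = n * (z + j * m) := fun j => by ring
  rw [PowerSeries.mul_inv_rev, PowerSeries.mul_inv_rev, inv_qp hz, inv_qp hyz,
    inv_qp (by positivity), inv_qp (by positivity), map_sub, sub_nonneg]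
  simp only [hv, hu]
  rw [mul_comm (∏ j ∈ range K, geomSeries (n * (z + j * m))),
    mul_comm (∏ j ∈ range L, geomSeries (n * (y * z + j * m)))]
  exact coeffLE_prod_geomSeries (R := ℚ) hn hy hz hco (· * m) (zero_mul m) hKL x

theorem dual_thm (m n y z K L : ℕ) (hm : 0 < m) (hn : 0 < n) (hy : 0 < y) (hz : 0 < z)
    (hco : Nat.Coprime n y) (hKL : L ≤ K) (x : ℕ) :
    0 ≤ PowerSeries.coeff x
      ((qp z m K * qp (n * y * z) (n * m) L)⁻¹
        - (qp (y * z) m L * qp (n * z) (n * m) K)⁻¹) :=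
  dual_thm_general m n y z K L hn hy hz hco hKL x
end

section
/- For any positive integers m, n, y, z with gcd(n,y)=1; integers K ≥ L ≥ 0; and integers S, T with max(S,T) ≤ K and 0 ≤ min(S,T) ≤ L, every coefficient in the power series expansion of 1/((q^z;q^m)_K (q^{nyz};q^{nm})_L) − 1/((q^{yz};q^m)_S (q^{nz};q^{nm})_T) is nonnegative. -/
open Finset PowerSeries

/-!
The coefficient of `q^x` in `1 / ∏ (1 - q^{e_i})` counts the representations
`x = ∑ c_i e_i`, so the claim compares two such counts, and we prove it by an injection. Take a
representation with `μ_j` parts `yz + jm` and `τ_j` parts `n(z + jm)`. For `j < L` write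
`μ_j = n q_j + r_j` with `r_j < n` and turn `n q_j` of the parts `yz + jm` into `q_j` parts
`n(yz + jm)`; each of the `r_j` remaining ones splits as `(z + jm) + (y - 1) z`. This yields
`r_j + n τ_j` parts `z + jm`, plus `(y - 1) ∑ r_i` extra parts `z` at `j = 0`.
The pair `(r_j, τ_j)` is recovered from `r_j + n τ_j` because `r_j < n` for `j < L`, while for
`j ≥ L` one of `r_j = μ_j`, `τ_j` vanishes as `min S T ≤ L`; at `j = 0`, once the other `r_i` are
known, `(r_0, τ_0)` is recovered from `y r_0 + n τ_0` since `gcd(n, y) = 1`.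
-/

section

variable {k : Type*} [Field k]

theorem PowerSeries.inv_one_sub_X_pow {a : ℕ} (ha : a ≠ 0) :
    (1 - X ^ a : k⟦X⟧)⁻¹ = expand a ha (mk 1) := by
  symm
  rw [eq_inv_iff_mul_eq_one (by simp [ha])]
  simpa [expand_X] using congrArg (expand a ha) (mk_one_mul_one_sub_eq_one k)

theorem PowerSeries.inv_prod {ι : Type*} (s : Finset ι) (f : ι → k⟦X⟧)
    (hf : ∀ i ∈ s, constantCoeff (f i) ≠ 0) :
    (∏ i ∈ s, f i)⁻¹ = ∏ i ∈ s, (f i)⁻¹ := by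
  rw [inv_eq_iff_mul_eq_one (by simpa [map_prod, prod_ne_zero_iff] using hf),
    ← prod_mul_distrib]
  exact prod_eq_one fun i hi => PowerSeries.inv_mul_cancel _ (hf i hi)

def representations {ι : Type*} [Fintype ι] [DecidableEq ι] (e : ι → ℕ) (x : ℕ) :
    Finset (ι → ℕ) :=
  {c ∈ Fintype.piFinset fun _ => range (x + 1) | ∑ i, c i * e i = x}

theorem mem_representations {ι : Type*} [Fintype ι] [DecidableEq ι] {e : ι → ℕ}
    (he : ∀ i, e i ≠ 0) {x : ℕ} {c : ι → ℕ} :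
    c ∈ representations e x ↔ ∑ i, c i * e i = x := by
  refine ⟨fun h => (mem_filter.1 h).2, fun h => mem_filter.2 ⟨?_, h⟩⟩
  refine Fintype.mem_piFinset.2 fun i => mem_range_succ_iff.2 ?_
  calc c i ≤ c i * e i := Nat.le_mul_of_pos_right _ (Nat.pos_of_ne_zero (he i))
    _ ≤ ∑ j, c j * e j :=
      single_le_sum (f := fun j => c j * e j) (fun j _ => Nat.zero_le _) (mem_univ i)
    _ = x := h

theorem coeff_inv_prod_one_sub_X_pow {ι : Type*} [Fintype ι] [DecidableEq ι] (e : ι → ℕ)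
    (he : ∀ i, e i ≠ 0) (x : ℕ) :
    coeff x (∏ i, (1 - X ^ e i : k⟦X⟧))⁻¹ = #(representations e x) := by
  rw [PowerSeries.inv_prod _ _ fun i _ => by simp [he i], coeff_prod]
  simp only [inv_one_sub_X_pow (he _), coeff_expand, coeff_mk, Pi.one_apply, prod_boole,
    mem_univ, true_implies, sum_boole]
  congr 1
  refine card_nbij' (fun l i => l i / e i) (fun c => Finsupp.equivFunOnFinite.symm
    fun i => c i * e i) ?_ ?_ ?_ ?_
  · intro l hl
    simp only [coe_filter, Set.mem_ofPred_eq, mem_finsuppAntidiag] at hl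
    simp only [mem_coe, mem_representations he]
    rw [← hl.1.1]
    exact sum_congr rfl fun i _ => Nat.div_mul_cancel (hl.2 i)
  · intro c hc
    simp only [mem_coe, mem_representations he] at hc
    simp [mem_finsuppAntidiag, hc]
  · intro l hl
    simp only [coe_filter, Set.mem_ofPred_eq] at hl
    ext i
    simp [Nat.div_mul_cancel (hl.2 i)]
  · intro c _
    funext i
    simp [Nat.mul_div_cancel _ (Nat.pos_of_ne_zero (he i))]

end

theorem qp_mul_qp (c m K c' m' L : ℕ) :
    qp c m K * qp c' m' L = ∏ i : Fin K ⊕ Fin L,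
      (1 - X ^ Sum.elim (fun j : Fin K => c + j * m) (fun j : Fin L => c' + j * m') i) := by
  rw [Fintype.prod_sum_type, qp, qp, ← Fin.prod_univ_eq_prod_range, ← Fin.prod_univ_eq_prod_range]
  rfl

theorem sum_elim_add_mul_ne_zero {K L : ℕ} (c m c' m' : ℕ) (hc : c ≠ 0) (hc' : c' ≠ 0)
    (i : Fin K ⊕ Fin L) :
    Sum.elim (fun j : Fin K => c + j * m) (fun j : Fin L => c' + j * m') i ≠ 0 := by
  rcases i with j | j <;> simp [hc, hc']

theorem eq_of_mul_add_mul_eq {n y r t r' t' : ℕ} (hn : 0 < n) (hy : 0 < y) (hco : n.Coprime y)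
    (hdec : (r < n ∧ r' < n) ∨ (r = 0 ∧ r' = 0) ∨ (t = 0 ∧ t' = 0))
    (h : y * r + n * t = y * r' + n * t') : r = r' ∧ t = t' := by
  rcases hdec with ⟨hr, hr'⟩ | ⟨rfl, rfl⟩ | ⟨rfl, rfl⟩
  · have hmod : y * r ≡ y * r' [MOD n] := by
      simpa [Nat.ModEq, Nat.add_mul_mod_self_left] using congrArg (· % n) h
    obtain rfl := (Nat.ModEq.cancel_left_of_coprime hco hmod).eq_of_lt_of_lt hr hr'
    exact ⟨rfl, Nat.eq_of_mul_eq_mul_left hn (Nat.add_left_cancel h)⟩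
  · simp only [mul_zero, zero_add] at h
    exact ⟨rfl, Nat.eq_of_mul_eq_mul_left hn h⟩
  · simp only [mul_zero, add_zero] at h
    exact ⟨Nat.eq_of_mul_eq_mul_left hy h, rfl⟩

theorem extend_val_eq_zero {S : ℕ} (f : Fin S → ℕ) {j : ℕ} (hj : S ≤ j) :
    Function.extend Fin.val f 0 j = 0 :=
  Function.extend_apply' _ _ _ fun ⟨i, hi⟩ => by omega

theorem sum_fin_mul_eq_sum_range_extend {S K : ℕ} (f : Fin S → ℕ) (w : ℕ → ℕ) (hSK : S ≤ K) :
    ∑ i, f i * w i = ∑ j ∈ range K, Function.extend Fin.val f 0 j * w j := by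
  rw [← sum_subset (range_subset_range.2 hSK) fun j _ hj => by
    rw [extend_val_eq_zero f (not_lt.1 (mem_range.not.1 hj)), zero_mul],
    ← Fin.sum_univ_eq_sum_range]
  simp [Fin.val_injective.extend_apply]

section Transfer

variable (n y K L : ℕ) {S T : ℕ}

def rem (μ : ℕ → ℕ) (j : ℕ) : ℕ := if j < L then μ j % n else μ j

def quo (μ : ℕ → ℕ) (j : ℕ) : ℕ := if j < L then μ j / n else 0

def transferMult (μ τ : ℕ → ℕ) (j : ℕ) : ℕ :=
  rem n L μ j + n * τ j + if j = 0 then (y - 1) * ∑ i ∈ range K, rem n L μ i else 0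

noncomputable def transfer (c : Fin S ⊕ Fin T → ℕ) : Fin K ⊕ Fin L → ℕ :=
  Sum.elim
    (fun j => transferMult n y K L (Function.extend Fin.val (c ∘ .inl) 0)
      (Function.extend Fin.val (c ∘ .inr) 0) j)
    (fun j => quo n L (Function.extend Fin.val (c ∘ .inl) 0) j)

variable {n y K L}

theorem rem_add_mul_quo (μ : ℕ → ℕ) (j : ℕ) : rem n L μ j + n * quo n L μ j = μ j := by
  unfold rem quo
  split_ifs
  · exact Nat.mod_add_div _ _
  · rw [mul_zero, add_zero]

theorem sum_transferMult_mul_add_sum_quo_mul (z m : ℕ) (μ τ : ℕ → ℕ) (hy : 0 < y) (hLK : L ≤ K) :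
    ∑ j ∈ range K, transferMult n y K L μ τ j * (z + j * m)
        + ∑ j ∈ range L, quo n L μ j * (n * y * z + j * (n * m)) =
      ∑ j ∈ range K, μ j * (y * z + j * m) + ∑ j ∈ range K, τ j * (n * z + j * (n * m)) := by
  obtain ⟨y, rfl⟩ := Nat.exists_eq_add_one_of_ne_zero hy.ne'
  have hcollect : ∑ j ∈ range K,
      (if j = 0 then y * ∑ i ∈ range K, rem n L μ i else 0) * (z + j * m) =
        ∑ j ∈ range K, rem n L μ j * (y * z) := by
    rcases K.eq_zero_or_pos with rfl | hK
    · simp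
    · simp [hK, mul_sum, mul_comm, mul_left_comm]
  have hquo : ∑ j ∈ range L, quo n L μ j * (n * (y + 1) * z + j * (n * m)) =
      ∑ j ∈ range K, quo n L μ j * (n * (y + 1) * z + j * (n * m)) :=
    sum_subset (range_subset_range.2 hLK) fun j _ hj => by
      simp [quo, not_lt.1 (mem_range.not.1 hj)]
  simp only [transferMult, Nat.add_sub_cancel, add_mul _ (ite _ _ _)]
  rw [sum_add_distrib, hcollect, hquo, ← sum_add_distrib, ← sum_add_distrib, ← sum_add_distrib]
  refine sum_congr rfl fun j _ => ?_
  rw [← rem_add_mul_quo (n := n) (L := L) μ j]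
  ring

theorem eq_of_transferMult_eq_of_quo_eq (hn : 0 < n) (hy : 0 < y) (hco : n.Coprime y)
    (hmin : min S T ≤ L) {μ τ μ' τ' : ℕ → ℕ} (hμ : ∀ j, S ≤ j → μ j = 0 ∧ μ' j = 0)
    (hτ : ∀ j, T ≤ j → τ j = 0 ∧ τ' j = 0)
    (hA : ∀ j < K, transferMult n y K L μ τ j = transferMult n y K L μ' τ' j)
    (hq : ∀ j < L, quo n L μ j = quo n L μ' j) :
    ∀ j < K, μ j = μ' j ∧ τ j = τ' j := by
  have hrem : ∀ j, (rem n L μ j < n ∧ rem n L μ' j < n) ∨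
      (rem n L μ j = 0 ∧ rem n L μ' j = 0) ∨ (τ j = 0 ∧ τ' j = 0) := by
    intro j
    by_cases hjL : j < L
    · simp only [rem, if_pos hjL]
      exact Or.inl ⟨Nat.mod_lt _ hn, Nat.mod_lt _ hn⟩
    rcases min_le_iff.1 hmin with hSL | hTL
    · obtain ⟨h, h'⟩ := hμ j (by omega)
      simp [rem, h, h']
    · exact Or.inr (Or.inr (hτ j (by omega)))
  have hpos : ∀ j, 0 < j → j < K → rem n L μ j = rem n L μ' j ∧ τ j = τ' j := by
    intro j hj0 hj
    refine eq_of_mul_add_mul_eq hn one_pos (Nat.coprime_one_right n) (hrem j) ?_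
    simpa [transferMult, hj0.ne'] using hA j hj
  have hzero : 0 < K → rem n L μ 0 = rem n L μ' 0 ∧ τ 0 = τ' 0 := by
    intro hK
    obtain ⟨K, rfl⟩ := Nat.exists_eq_add_one_of_ne_zero hK.ne'
    obtain ⟨y, rfl⟩ := Nat.exists_eq_add_one_of_ne_zero hy.ne'
    have htail : ∑ i ∈ range K, rem n L μ (i + 1) = ∑ i ∈ range K, rem n L μ' (i + 1) :=
      sum_congr rfl fun i hi => (hpos (i + 1) i.succ_pos (by simp at hi; omega)).1
    refine eq_of_mul_add_mul_eq hn hy hco (hrem 0) ?_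
    have h0 := hA 0 hK
    simp only [transferMult, ↓reduceIte, sum_range_succ', htail, Nat.add_sub_cancel] at h0
    ring_nf at h0 ⊢
    linarith
  intro j hj
  obtain ⟨hr, hτ⟩ : rem n L μ j = rem n L μ' j ∧ τ j = τ' j := by
    rcases j.eq_zero_or_pos with rfl | hj0
    · exact hzero hj
    · exact hpos j hj0 hj
  refine ⟨?_, hτ⟩
  rw [← rem_add_mul_quo (n := n) (L := L) μ j, ← rem_add_mul_quo (n := n) (L := L) μ' j, hr]
  by_cases hjL : j < L
  · rw [hq j hjL]
  · simp [quo, hjL]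

theorem card_representations_le {z m : ℕ} (hn : 0 < n) (hy : 0 < y) (hz : 0 < z)
    (hco : n.Coprime y) (hLK : L ≤ K) (hSK : S ≤ K) (hTK : T ≤ K) (hmin : min S T ≤ L)
    (x : ℕ) :
    #(representations (Sum.elim (fun j : Fin S => y * z + j * m)
        (fun j : Fin T => n * z + j * (n * m))) x) ≤
      #(representations (Sum.elim (fun j : Fin K => z + j * m)
        (fun j : Fin L => n * y * z + j * (n * m))) x) := by
  have hB := sum_elim_add_mul_ne_zero (K := S) (L := T) (y * z) m (n * z) (n * m)
    (by positivity) (by positivity)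
  have hA := sum_elim_add_mul_ne_zero (K := K) (L := L) z m (n * y * z) (n * m)
    hz.ne' (by positivity)
  refine card_le_card_of_injOn (transfer n y K L) (fun c hc => ?_) fun c hc c' hc' h => ?_
  · simp only [mem_coe, mem_representations hA, mem_representations hB,
      Fintype.sum_sum_type, Sum.elim_inl, Sum.elim_inr, transfer] at hc ⊢
    rw [Fin.sum_univ_eq_sum_range (fun j => transferMult n y K L _ _ j * (z + j * m)),
      Fin.sum_univ_eq_sum_range (fun j => quo n L _ j * (n * y * z + j * (n * m))),
      sum_transferMult_mul_add_sum_quo_mul z m _ _ hy hLK, ← hc,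
      ← sum_fin_mul_eq_sum_range_extend _ _ hSK, ← sum_fin_mul_eq_sum_range_extend _ _ hTK]
    rfl
  · have heq := eq_of_transferMult_eq_of_quo_eq hn hy hco hmin
      (fun j hj => ⟨extend_val_eq_zero _ hj, extend_val_eq_zero _ hj⟩)
      (fun j hj => ⟨extend_val_eq_zero _ hj, extend_val_eq_zero _ hj⟩)
      (fun j hj => congrFun h (.inl ⟨j, hj⟩)) (fun j hj => congrFun h (.inr ⟨j, hj⟩))
    funext i
    rcases i with i | i
    · simpa [Fin.val_injective.extend_apply] using (heq i (by omega)).1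
    · simpa [Fin.val_injective.extend_apply] using (heq i (by omega)).2

end Transfer

theorem gen_thm_general (m n y z K L S T : ℕ) (hn : 0 < n) (hy : 0 < y) (hz : 0 < z)
    (hco : Nat.Coprime n y) (hKL : L ≤ K)
    (hST : max S T ≤ K) (hmin : min S T ≤ L) (x : ℕ) :
    0 ≤ PowerSeries.coeff (R := ℚ) x
      ((qp z m K * qp (n * y * z) (n * m) L)⁻¹
        - (qp (y * z) m S * qp (n * z) (n * m) T)⁻¹) := by
  rw [qp_mul_qp, qp_mul_qp, map_sub, sub_nonneg,
    coeff_inv_prod_one_sub_X_pow _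
      (sum_elim_add_mul_ne_zero z _ (n * y * z) _ hz.ne' (by positivity)),
    coeff_inv_prod_one_sub_X_pow _
      (sum_elim_add_mul_ne_zero (y * z) _ (n * z) _ (by positivity) (by positivity))]
  exact_mod_cast card_representations_le hn hy hz hco hKL (max_le_iff.1 hST).1
    (max_le_iff.1 hST).2 hmin x

theorem gen_thm (m n y z K L S T : ℕ) (hm : 0 < m) (hn : 0 < n) (hy : 0 < y) (hz : 0 < z)
    (hco : Nat.Coprime n y) (hKL : L ≤ K)
    (hST : max S T ≤ K) (hmin : min S T ≤ L) (x : ℕ) :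
    0 ≤ PowerSeries.coeff (R := ℚ) x
      ((qp z m K * qp (n * y * z) (n * m) L)⁻¹
        - (qp (y * z) m S * qp (n * z) (n * m) T)⁻¹) :=
  gen_thm_general m n y z K L S T hn hy hz hco hKL hST hmin x
end

section
/- For any positive integers L, y, z with y odd and y > 1, setting m = 2(y−1)z, every coefficient in the power series expansion of 1/((q^z; q^m)_L (q^{m+2z}; q^{2m})_L) − 1/((q^{yz}; q^m)_L (q^{2z}; q^{2m})_L) is nonnegative. -/
open Finset PowerSeries

/-!
Put `a_j = z + j m` and `D = (y - 1) z`, so that the two sides are `∏ A_j` and `∏ B_j` with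
`A_j = 1 / ((1 - q^{a_j}) (1 - q^{2 a_j + 2D}))` and `B_j = 1 / ((1 - q^{a_j + D}) (1 - q^{2 a_j}))`.
Since `1 / (1 - q^a) = (1 + q^a) / (1 - q^{2a})`, both share the factor
`G_j = 1 / ((1 - q^{2 a_j}) (1 - q^{2 a_j + 2D}))`: `A_j = (1 + q^{a_j}) G_j` and
`B_j = (1 + q^{a_j + D}) G_j`. Telescoping shows that `∏ (1 + q^{a_j}) - ∏ (1 + q^{a_j + D})` is
`1 - q^D` times a series with nonnegative coefficients, and `1 - q^D` is absorbed by the factor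
`1 / (1 - q^{2z})` of `G_0`: as `y` is odd, `2z ∣ D`, so `(1 - q^D) / (1 - q^{2z})` is a sum of
powers of `q`.
-/

namespace PowerSeries

section OrderedSemiring

variable (R : Type*) [CommSemiring R] [PartialOrder R] [IsOrderedRing R]

def nonnegCoeffs : Subsemiring R⟦X⟧ where
  carrier := {f | ∀ n, 0 ≤ coeff n f}
  mul_mem' {f g} hf hg n := by
    rw [coeff_mul]
    exact sum_nonneg fun p _ => mul_nonneg (hf p.1) (hg p.2)
  one_mem' n := by
    rw [coeff_one]
    split_ifs <;> simp
  add_mem' {f g} hf hg n := by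
    rw [map_add]
    exact add_nonneg (hf n) (hg n)
  zero_mem' n := by simp

variable {R}

theorem X_mem_nonnegCoeffs : (X : R⟦X⟧) ∈ nonnegCoeffs R := by
  intro n
  rw [coeff_X]
  split_ifs <;> simp

end OrderedSemiring

section Field

variable {k : Type*} [Field k]

theorem inv_prod_s18 {ι : Type*} (s : Finset ι) (f : ι → k⟦X⟧) :
    (∏ i ∈ s, f i)⁻¹ = ∏ i ∈ s, (f i)⁻¹ := by
  classical
  induction s using Finset.induction_on with
  | empty => simp
  | insert i s hi ih => rw [prod_insert hi, prod_insert hi, PowerSeries.mul_inv_rev, ih, mul_comm]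

theorem inv_one_sub_X_pow_s18 {a : ℕ} (ha : a ≠ 0) :
    (1 - X ^ a : k⟦X⟧)⁻¹ = (1 + X ^ a) * (1 - X ^ (2 * a))⁻¹ := by
  rw [PowerSeries.inv_eq_iff_mul_eq_one (by simp [ha])]
  calc (1 + X ^ a) * (1 - X ^ (2 * a) : k⟦X⟧)⁻¹ * (1 - X ^ a)
      = (1 - X ^ (2 * a))⁻¹ * (1 - X ^ (2 * a)) := by ring
    _ = 1 := PowerSeries.inv_mul_cancel _ (by simp [ha])

theorem one_sub_X_pow_mul_inv {d : ℕ} (hd : d ≠ 0) (n : ℕ) :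
    (1 - X ^ (d * n) : k⟦X⟧) * (1 - X ^ d)⁻¹ = ∑ t ∈ range n, X ^ (d * t) := by
  calc (1 - X ^ (d * n) : k⟦X⟧) * (1 - X ^ d)⁻¹
      = (∑ t ∈ range n, (X ^ d) ^ t) * ((1 - X ^ d) * (1 - X ^ d)⁻¹) := by
        rw [← mul_assoc, geom_sum_mul_neg, pow_mul]
    _ = ∑ t ∈ range n, X ^ (d * t) := by
        rw [PowerSeries.mul_inv_cancel _ (by simp [hd]), mul_one]
        simp_rw [pow_mul]

variable [PartialOrder k] [IsOrderedRing k]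

theorem inv_one_sub_mem_nonnegCoeffs {f : k⟦X⟧} (hf : f ∈ nonnegCoeffs k)
    (h0 : constantCoeff f = 0) : (1 - f)⁻¹ ∈ nonnegCoeffs k := by
  intro n
  induction n using Nat.strong_induction_on with
  | _ n ih =>
  have hc : constantCoeff (1 - f) = 1 := by simp [h0]
  rw [coeff_inv, hc, inv_one]
  split_ifs with hn
  · exact zero_le_one
  rw [neg_one_mul, ← sum_neg_distrib]
  refine sum_nonneg fun p hp => ?_
  split_ifs with hp2
  · have hp1 : p.1 ≠ 0 := by have := mem_antidiagonal.mp hp; omega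
    rw [map_sub, coeff_one, if_neg hp1, zero_sub, neg_mul, neg_neg]
    exact mul_nonneg (hf _) (ih _ hp2)
  · simp

theorem inv_one_sub_X_pow_mem_nonnegCoeffs {e : ℕ} (he : e ≠ 0) :
    (1 - X ^ e : k⟦X⟧)⁻¹ ∈ nonnegCoeffs k :=
  inv_one_sub_mem_nonnegCoeffs (pow_mem X_mem_nonnegCoeffs e) (by simp [he])

theorem one_sub_X_pow_mul_inv_mem_nonnegCoeffs {d D : ℕ} (hd : d ≠ 0) (hdD : d ∣ D) :
    (1 - X ^ D : k⟦X⟧) * (1 - X ^ d)⁻¹ ∈ nonnegCoeffs k := by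
  obtain ⟨n, rfl⟩ := hdD
  rw [one_sub_X_pow_mul_inv hd]
  exact sum_mem fun t _ => pow_mem X_mem_nonnegCoeffs _

end Field

end PowerSeries

theorem Finset.prod_sub_prod_mem_mul {ι R : Type*} [CommRing R] (S : Subsemiring R) (c : R)
    (s : Finset ι) {x y : ι → R} (hx : ∀ i ∈ s, x i ∈ S) (hy : ∀ i ∈ s, y i ∈ S)
    (hxy : ∀ i ∈ s, ∃ r ∈ S, x i - y i = c * r) :
    ∃ r ∈ S, ∏ i ∈ s, x i - ∏ i ∈ s, y i = c * r := by
  classical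
  induction s using Finset.induction_on with
  | empty => exact ⟨0, S.zero_mem, by simp⟩
  | insert i s hi ih =>
    simp only [mem_insert, forall_eq_or_imp] at hx hy hxy
    obtain ⟨r, hr, hr_eq⟩ := ih hx.2 hy.2 hxy.2
    obtain ⟨ri, hri, hri_eq⟩ := hxy.1
    refine ⟨x i * r + ri * ∏ j ∈ s, y j,
      S.add_mem (S.mul_mem hx.1 hr) (S.mul_mem hri (S.prod_mem hy.2)), ?_⟩
    rw [prod_insert hi, prod_insert hi]
    linear_combination x i * hr_eq + (∏ j ∈ s, y j) * hri_eq

theorem prod_inv_sub_prod_inv_mem_nonnegCoeffs {k : Type*} [Field k] [PartialOrder k]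
    [IsOrderedRing k] (a : ℕ → ℕ) (ha : ∀ j, a j ≠ 0) {D : ℕ} (hD : 2 * a 0 ∣ D) (L : ℕ) :
    ∏ j ∈ range L, (1 - X ^ a j : k⟦X⟧)⁻¹ * (1 - X ^ (2 * (a j + D)))⁻¹
      - ∏ j ∈ range L, (1 - X ^ (a j + D) : k⟦X⟧)⁻¹ * (1 - X ^ (2 * a j))⁻¹
      ∈ nonnegCoeffs k := by
  obtain _ | L := L
  · simp
  set G : ℕ → k⟦X⟧ := fun j => (1 - X ^ (2 * a j))⁻¹ * (1 - X ^ (2 * (a j + D)))⁻¹ with hG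
  have hA (j : ℕ) :
      (1 - X ^ a j : k⟦X⟧)⁻¹ * (1 - X ^ (2 * (a j + D)))⁻¹ = (1 + X ^ a j) * G j := by
    rw [inv_one_sub_X_pow_s18 (ha j)]
    ring
  have hB (j : ℕ) :
      (1 - X ^ (a j + D) : k⟦X⟧)⁻¹ * (1 - X ^ (2 * a j))⁻¹ = (1 + X ^ (a j + D)) * G j := by
    rw [inv_one_sub_X_pow_s18 (by have := ha j; omega)]
    ring
  obtain ⟨r, hr, hr_eq⟩ := (range (L + 1)).prod_sub_prod_mem_mul (nonnegCoeffs k) (1 - X ^ D)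
    (x := fun j => 1 + X ^ a j) (y := fun j => 1 + X ^ (a j + D))
    (fun j _ => add_mem (one_mem _) (pow_mem X_mem_nonnegCoeffs _))
    (fun j _ => add_mem (one_mem _) (pow_mem X_mem_nonnegCoeffs _))
    (fun j _ => ⟨X ^ a j, pow_mem X_mem_nonnegCoeffs _, by ring⟩)
  simp only [hA, hB, prod_mul_distrib, ← sub_mul, hr_eq, prod_range_succ' G]
  have hregroup : (1 - X ^ D) * r * ((∏ j ∈ range L, G (j + 1)) * G 0)
      = (1 - X ^ D) * (1 - X ^ (2 * a 0))⁻¹ * (1 - X ^ (2 * (a 0 + D)))⁻¹ * r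
        * ∏ j ∈ range L, G (j + 1) := by
    rw [hG]
    ring
  rw [hregroup]
  refine mul_mem (mul_mem (mul_mem (one_sub_X_pow_mul_inv_mem_nonnegCoeffs ?_ hD)
    (inv_one_sub_X_pow_mem_nonnegCoeffs ?_)) hr) (prod_mem fun j _ =>
      mul_mem (inv_one_sub_X_pow_mem_nonnegCoeffs ?_) (inv_one_sub_X_pow_mem_nonnegCoeffs ?_))
  all_goals simp [ha]

theorem qp_mul_qp_inv (c m c' m' L : ℕ) :
    (qp c m L * qp c' m' L)⁻¹
      = ∏ j ∈ range L, (1 - X ^ (c + j * m) : ℚ⟦X⟧)⁻¹ * (1 - X ^ (c' + j * m'))⁻¹ := by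
  rw [PowerSeries.mul_inv_rev, qp, qp, inv_prod_s18, inv_prod_s18, prod_mul_distrib, mul_comm]

theorem lecture_hall_even_general (L y z m : ℕ) (hodd : Odd y)
    (hz : 0 < z) (hm : m = 2 * (y - 1) * z) (x : ℕ) :
    0 ≤ PowerSeries.coeff (R := ℚ) x
      ((qp z m L * qp (m + 2 * z) (2 * m) L)⁻¹
        - (qp (y * z) m L * qp (2 * z) (2 * m) L)⁻¹) := by
  obtain ⟨n, rfl⟩ := hodd
  replace hm : m = 4 * n * z := by rw [hm, Nat.add_sub_cancel]; ring
  have key := prod_inv_sub_prod_inv_mem_nonnegCoeffs (k := ℚ) (fun j => z + j * m)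
    (fun j => by positivity) (D := 2 * n * z) (Dvd.intro_left n (by ring)) L
  have hdouble_shift (j : ℕ) : m + 2 * z + j * (2 * m) = 2 * (z + j * m + 2 * n * z) := by
    rw [hm]; ring
  have hshift (j : ℕ) : (2 * n + 1) * z + j * m = z + j * m + 2 * n * z := by ring
  have hdouble (j : ℕ) : 2 * z + j * (2 * m) = 2 * (z + j * m) := by ring
  rw [qp_mul_qp_inv, qp_mul_qp_inv]
  simp only [hdouble_shift, hshift, hdouble]
  exact key x

theorem lecture_hall_even (L y z m : ℕ) (hL : 0 < L) (hy : 1 < y) (hodd : Odd y)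
    (hz : 0 < z) (hm : m = 2 * (y - 1) * z) (x : ℕ) :
    0 ≤ PowerSeries.coeff (R := ℚ) x
      ((qp z m L * qp (m + 2 * z) (2 * m) L)⁻¹
        - (qp (y * z) m L * qp (2 * z) (2 * m) L)⁻¹) :=
  lecture_hall_even_general L y z m hodd hz hm x
end
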